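/- arXiv:math/0012017 — 6 statements merged into one kernel-verified Lean document; each statement's English description precedes it below -/
import Mathlib

section
/- Let C be a convex subset of a finite-dimensional real inner product space E, let u ∈ E be nonzero and H = {f ∈ E : ⟨f,u⟩ > 0} the corresponding open half-space, and let v ∈ E. Suppose there exists a point x ∈ C ∩ H with ⟨x,v⟩ = 0, and suppose ⟨y,v⟩ ≥ 0 for every y ∈ C ∩ H. Then ⟨y,v⟩ ≥ 0 for every y ∈ C. -/
/-! Along the segment from `x` to `y`, `⟪·, v⟫` scales as `t ↦ t ⟪y, v⟫` because it vanishes at `x`,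
while `⟪·, u⟫` stays positive for small `t > 0` by continuity. Such a point lies in `C ∩ H`, so
`t ⟪y, v⟫ ≥ 0` with `t > 0`. -/

open RealInnerProductSpace AffineMap Filter Topology Set

theorem LinearMap.map_lineMap {k E F : Type*} [Ring k] [AddCommGroup E] [Module k E]
    [AddCommGroup F] [Module k F] (φ : E →ₗ[k] F) (x y : E) (t : k) :
    φ (lineMap x y t) = lineMap (φ x) (φ y) t :=
  φ.toAffineMap.apply_lineMap x y t

section

variable {E : Type*} [AddCommGroup E] [Module ℝ E]

theorem LinearMap.eventually_pos_lineMap (φ : E →ₗ[ℝ] ℝ) {x : E} (hx : 0 < φ x) (y : E) :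
    ∀ᶠ t in 𝓝[>] (0 : ℝ), t ∈ Ioo 0 1 ∧ 0 < φ (lineMap x y t) := by
  have hcont : Continuous fun t : ℝ => φ (lineMap x y t) := by
    simp only [LinearMap.map_lineMap]
    fun_prop
  have hpos : ∀ᶠ t in 𝓝 (0 : ℝ), 0 < φ (lineMap x y t) :=
    continuousAt_const.eventually_lt hcont.continuousAt (by simpa using hx)
  exact Eventually.and (Ioo_mem_nhdsGT one_pos) (nhdsWithin_le_nhds hpos)

theorem Convex.nonneg_of_nonneg_on_halfspace {C : Set E} (hC : Convex ℝ C) {φ ψ : E →ₗ[ℝ] ℝ}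
    {x : E} (hxC : x ∈ C) (hφx : 0 < φ x) (hψx : ψ x = 0)
    (hψ : ∀ z ∈ C, 0 < φ z → 0 ≤ ψ z) {y : E} (hyC : y ∈ C) : 0 ≤ ψ y := by
  obtain ⟨t, ⟨ht₀, ht₁⟩, hφt⟩ := (φ.eventually_pos_lineMap hφx y).exists
  have hmem : lineMap x y t ∈ C := hC.lineMap_mem hxC hyC ⟨ht₀.le, ht₁.le⟩
  have hψt : ψ (lineMap x y t) = t * ψ y := by
    rw [LinearMap.map_lineMap, hψx, lineMap_apply_ring', sub_zero, add_zero]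
  exact nonneg_of_mul_nonneg_right (hψt ▸ hψ _ hmem hφt) ht₀

end

theorem nonneg_on_halfspace_slice_of_vanishing_point_general
    {E : Type*} [NormedAddCommGroup E] [InnerProductSpace ℝ E]
    (C : Set E) (hC : Convex ℝ C) (u : E) (v : E)
    (hx : ∃ x ∈ C, 0 < ⟪x, u⟫ ∧ ⟪x, v⟫ = 0)
    (hnn : ∀ y ∈ C, 0 < ⟪y, u⟫ → 0 ≤ ⟪y, v⟫) :
    ∀ y ∈ C, 0 ≤ ⟪y, v⟫ := by
  obtain ⟨x, hxC, hxu, hxv⟩ := hx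
  exact fun y hyC => hC.nonneg_of_nonneg_on_halfspace (φ := (innerₗ E).flip u)
    (ψ := (innerₗ E).flip v) hxC hxu hxv hnn hyC

/-- Let `C` be a convex set, `H = {f | ⟪f,u⟫ > 0}` an open half-space and `v` a vector.
If the linear functional `⟪·,v⟫` is nonnegative on `C ∩ H` and vanishes at some point of
`C ∩ H`, then it is nonnegative on all of `C`. -/
theorem nonneg_on_halfspace_slice_of_vanishing_point
    {E : Type*} [NormedAddCommGroup E] [InnerProductSpace ℝ E] [FiniteDimensional ℝ E]
    (C : Set E) (hC : Convex ℝ C) (u : E) (hu : u ≠ 0) (v : E)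
    (hx : ∃ x ∈ C, 0 < ⟪x, u⟫ ∧ ⟪x, v⟫ = 0)
    (hnn : ∀ y ∈ C, 0 < ⟪y, u⟫ → 0 ≤ ⟪y, v⟫) :
    ∀ y ∈ C, 0 ≤ ⟪y, v⟫ :=
  nonneg_on_halfspace_slice_of_vanishing_point_general C hC u v hx hnn
end

section
/- Let E be a finite-dimensional real inner product space with dim E ≥ 2. Let C ⊆ E be a convex cone of the form C = {t·k : t ≥ 0, k ∈ K} for some compact subset K of the unit sphere S, and assume C has nonempty interior. Suppose H¹, …, Hˢ are open half-spaces with C ∖ {0} ⊆ H¹ ∪ ⋯ ∪ Hˢ, and suppose that for each β ∈ {1,…,s} there are finitely many vectors v₁^β, …, v_{r(β)}^β ∈ E satisfying: (a) C ∩ H^β = (⋂_{i} {f ∈ E : ⟨f, v_i^β⟩ ≥ 0}) ∩ H^β, and (b) minimality: for each i there exists x ∈ C ∩ H^β with ⟨x, v_i^β⟩ = 0. Then C = ⋂_{i,β} {f ∈ E : ⟨f, v_i^β⟩ ≥ 0}; in particular C is a convex polyhedral cone. -/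
/-!
Each inequality `⟪·, v⟫ ≥ 0` of a local description holds on all of `C`: for `x ∈ C`, adding a
large multiple of the point `y ∈ C ∩ H` with `⟪y, v⟫ = 0` moves `x` into `H` without changing
`⟪x, v⟫`. Conversely, let `x ≠ 0` satisfy all the inequalities. Join it to a point `x₀ ∈ C` off
the line `ℝ x`, which exists because `C` has interior points and `dim E ≥ 2`; the segment
satisfies the inequalities and misses `0`. On the segment, `C` is closed, and it is also
relatively open, because each point of `C` on it lies in some `H^β`, where `C` is cut out by
the inequalities. By connectedness the whole segment, hence `x`, lies in `C`.
-/

open RealInnerProductSpace Set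

theorem IsPreconnected.subset_of_isClosed_of_isOpen {X : Type*} [TopologicalSpace X]
    {L C U : Set X} (hL : IsPreconnected L) (hC : IsClosed C) (hU : IsOpen U)
    (hCU : L ∩ C ⊆ U) (hUC : L ∩ U ⊆ C) (hne : (L ∩ C).Nonempty) : L ⊆ C := by
  have hLcover : L ⊆ U ∪ Cᶜ := fun y hy => by
    by_cases hyC : y ∈ C
    · exact Or.inl (hCU ⟨hy, hyC⟩)
    · exact Or.inr hyC
  have hLdisj : L ∩ (U ∩ Cᶜ) = ∅ :=
    eq_empty_of_forall_notMem fun y ⟨hy, hyU, hyC⟩ => hyC (hUC ⟨hy, hyU⟩)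
  rcases isPreconnected_iff_subset_of_disjoint.mp hL U Cᶜ hU hC.isOpen_compl hLcover hLdisj
    with hLU | hLC
  · exact fun y hy => hUC ⟨hy, hLU hy⟩
  · obtain ⟨y, hy, hyC⟩ := hne
    exact absurd hyC (hLC hy)

theorem Convex.mem_of_zero_notMem_segment {E : Type*} [AddCommGroup E] [Module ℝ E]
    [TopologicalSpace E] [ContinuousAdd E] [ContinuousSMul ℝ E] {C P U : Set E}
    (hC : IsClosed C) (hU : IsOpen U) (hP : Convex ℝ P) (hCP : C ⊆ P) (hCU : C \ {0} ⊆ U)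
    (hPU : P ∩ U ⊆ C) {x₀ x : E} (hx₀ : x₀ ∈ C) (hx : x ∈ P) (h0 : (0 : E) ∉ segment ℝ x₀ x) :
    x ∈ C := by
  have hsegP : segment ℝ x₀ x ⊆ P := hP.segment_subset (hCP hx₀) hx
  have hseg : segment ℝ x₀ x ⊆ C :=
    (convex_segment x₀ x).isPreconnected.subset_of_isClosed_of_isOpen hC hU
      (fun y ⟨hy, hyC⟩ => hCU ⟨hyC, fun h => h0 (h ▸ hy)⟩)
      (fun y ⟨hy, hyU⟩ => hPU ⟨hsegP hy, hyU⟩)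
      ⟨x₀, left_mem_segment ℝ x₀ x, hx₀⟩
  exact hseg (right_mem_segment ℝ x₀ x)

theorem zero_notMem_segment_of_notMem_span_singleton {𝕜 E : Type*} [Field 𝕜] [LinearOrder 𝕜]
    [IsStrictOrderedRing 𝕜] [AddCommGroup E] [Module 𝕜 E] {x y : E} (hx : x ≠ 0)
    (hy : y ∉ Submodule.span 𝕜 {x}) : (0 : E) ∉ segment 𝕜 y x := by
  rintro ⟨a, b, -, -, hab, h0⟩
  have hind : LinearIndependent 𝕜 ![x, y] := (LinearIndependent.pair_iff' hx).mpr
    fun c hc => hy (Submodule.mem_span_singleton.mpr ⟨c, hc⟩)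
  obtain ⟨hb, ha⟩ := LinearIndependent.pair_iff.mp hind b a (by rw [add_comm]; exact h0)
  simp [ha, hb] at hab

theorem exists_mem_notMem_span_singleton {E : Type*} [NormedAddCommGroup E] [NormedSpace ℝ E]
    [FiniteDimensional ℝ E] (hdim : 2 ≤ Module.finrank ℝ E) {A : Set E}
    (hA : (interior A).Nonempty) (x : E) : ∃ y ∈ A, y ∉ Submodule.span ℝ {x} := by
  by_contra! hAx
  have htop : Submodule.span ℝ {x} = ⊤ :=
    Submodule.eq_top_of_nonempty_interior' _ (hA.mono (interior_mono hAx))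
  have hle := finrank_span_le_card (R := ℝ) ({x} : Set E)
  rw [htop, finrank_top, Set.toFinset_singleton, Finset.card_singleton] at hle
  omega

theorem isClosed_cone_of_isCompact_of_subset_sphere {E : Type*} [NormedAddCommGroup E]
    [NormedSpace ℝ E] {K : Set E} (hK : IsCompact K) (hKS : K ⊆ {f : E | ‖f‖ = 1}) :
    IsClosed {x : E | ∃ t : ℝ, 0 ≤ t ∧ ∃ k ∈ K, x = t • k} := by
  set cone := {x : E | ∃ t : ℝ, 0 ≤ t ∧ ∃ k ∈ K, x = t • k}
  refine closure_subset_iff_isClosed.mp fun x hx => ?_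
  set R := ‖x‖ + 1
  have hcpt : IsCompact ((fun p : ℝ × E => p.1 • p.2) '' (Icc 0 R ×ˢ K)) :=
    (isCompact_Icc.prod hK).image (by fun_prop)
  have hball : Metric.ball 0 R ∩ cone ⊆ (fun p : ℝ × E => p.1 • p.2) '' (Icc 0 R ×ˢ K) := by
    rintro _ ⟨hR, t, ht, k, hk, rfl⟩
    rw [mem_ball_zero_iff, norm_smul, hKS hk, mul_one, Real.norm_of_nonneg ht] at hR
    exact ⟨(t, k), ⟨⟨ht, hR.le⟩, hk⟩, rfl⟩
  have hxR : x ∈ closure (Metric.ball 0 R ∩ cone) :=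
    Metric.isOpen_ball.inter_closure ⟨mem_ball_zero_iff.mpr (lt_add_one _), hx⟩
  obtain ⟨⟨t, k⟩, ⟨ht, hk⟩, rfl⟩ := hcpt.isClosed.closure_subset_iff.mpr hball hxR
  exact ⟨t, ht.1, k, hk, rfl⟩

theorem ConvexCone.inner_nonneg_of_inner_eq_zero_of_mem_halfSpace {E : Type*}
    [NormedAddCommGroup E] [InnerProductSpace ℝ E] (C : ConvexCone ℝ E) {u v y x : E}
    (hcut : ∀ z ∈ C, 0 < ⟪z, u⟫ → 0 ≤ ⟪z, v⟫)
    (hyC : y ∈ C) (hyu : 0 < ⟪y, u⟫) (hyv : ⟪y, v⟫ = 0) (hx : x ∈ C) : 0 ≤ ⟪x, v⟫ := by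
  obtain ⟨t, ht, hxu⟩ := exists_pos_lt_mul hyu (-⟪x, u⟫)
  have hz := hcut (x + t • y) (C.add_mem hx (C.smul_mem ht hyC))
    (by rw [inner_add_left, real_inner_smul_left]; linarith)
  rwa [inner_add_left, real_inner_smul_left, hyv, mul_zero, add_zero] at hz

theorem convex_cone_polyhedral_of_locally_polyhedral_general
    {E : Type*} [NormedAddCommGroup E] [InnerProductSpace ℝ E] [FiniteDimensional ℝ E]
    (hdim : 2 ≤ Module.finrank ℝ E)
    (C : Set E)
    (hCadd : ∀ x ∈ C, ∀ y ∈ C, x + y ∈ C)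
    (hCsmul : ∀ t : ℝ, 0 < t → ∀ x ∈ C, t • x ∈ C)
    (K : Set E) (hK : IsCompact K) (hKS : K ⊆ {f : E | ‖f‖ = 1})
    (hCK : C = {x : E | ∃ t : ℝ, 0 ≤ t ∧ ∃ k ∈ K, x = t • k})
    (hCint : (interior C).Nonempty)
    (s : ℕ) (u : Fin s → E)
    (hcover : C \ {0} ⊆ ⋃ β, {f : E | 0 < ⟪f, u β⟫})
    (r : Fin s → ℕ) (v : (β : Fin s) → Fin (r β) → E)
    (hcut : ∀ β, C ∩ {f : E | 0 < ⟪f, u β⟫} =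
      (⋂ i, {f : E | 0 ≤ ⟪f, v β i⟫}) ∩ {f : E | 0 < ⟪f, u β⟫})
    (hmin : ∀ β i, ∃ x ∈ C ∩ {f : E | 0 < ⟪f, u β⟫}, ⟪x, v β i⟫ = 0) :
    C = ⋂ β, ⋂ i, {f : E | 0 ≤ ⟪f, v β i⟫} := by
  set P := ⋂ β, ⋂ i, {f : E | 0 ≤ ⟪f, v β i⟫}
  let cone : ConvexCone ℝ E := ⟨C, fun t ht x hx => hCsmul t ht x hx, hCadd⟩
  have hCP : C ⊆ P := fun x hx => mem_iInter₂.mpr fun β i => by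
    obtain ⟨y, ⟨hyC, hyu⟩, hyv⟩ := hmin β i
    refine cone.inner_nonneg_of_inner_eq_zero_of_mem_halfSpace (fun z hz hzu => ?_) hyC hyu hyv hx
    exact mem_iInter.mp ((hcut β).subset ⟨hz, hzu⟩).1 i
  have hPU : P ∩ ⋃ β, {f | 0 < ⟪f, u β⟫} ⊆ C := fun f ⟨hfP, hfU⟩ => by
    obtain ⟨β, hfu⟩ := mem_iUnion.mp hfU
    exact ((hcut β).superset ⟨mem_iInter.mp hfP β, hfu⟩).1
  have hC0 : (0 : E) ∈ C := by
    obtain ⟨c, hc⟩ := hCint.mono interior_subset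
    rw [hCK] at hc ⊢
    obtain ⟨-, -, k, hk, -⟩ := hc
    exact ⟨0, le_rfl, k, hk, (zero_smul ℝ k).symm⟩
  refine hCP.antisymm fun x hxP => ?_
  by_cases hx0 : x = 0
  · exact hx0 ▸ hC0
  obtain ⟨x₀, hx₀C, hx₀x⟩ := exists_mem_notMem_span_singleton hdim hCint x
  have hPconvex : Convex ℝ P :=
    convex_iInter₂ fun β i => convex_halfSpace_ge ((innerₗ E).flip (v β i)).isLinear 0
  exact hPconvex.mem_of_zero_notMem_segment
    (hCK ▸ isClosed_cone_of_isCompact_of_subset_sphere hK hKS)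
    (isOpen_iUnion fun β => isOpen_lt continuous_const (by fun_prop)) hCP hcover hPU hx₀C hxP
    (zero_notMem_segment_of_notMem_span_singleton hx0 hx₀x)

/-- A convex cone `C` over a compact subset `K` of the unit sphere, with nonempty interior,
such that `C \ {0}` is covered by finitely many open half-spaces `H^β = {f | ⟪f, u β⟫ > 0}`,
and such that on each `H^β` the cone is cut out by finitely many inequalities
`⟪·, v β i⟫ ≥ 0` satisfying the minimality condition that each inequality vanishes at some
point of `C ∩ H^β`, is globally the intersection of all those half-space inequalities:
`C = ⋂_{i,β} {f | ⟪f, v β i⟫ ≥ 0}`. -/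
theorem convex_cone_polyhedral_of_locally_polyhedral
    {E : Type*} [NormedAddCommGroup E] [InnerProductSpace ℝ E] [FiniteDimensional ℝ E]
    (hdim : 2 ≤ Module.finrank ℝ E)
    (C : Set E)
    (hCadd : ∀ x ∈ C, ∀ y ∈ C, x + y ∈ C)
    (hCsmul : ∀ t : ℝ, 0 < t → ∀ x ∈ C, t • x ∈ C)
    (K : Set E) (hK : IsCompact K) (hKS : K ⊆ {f : E | ‖f‖ = 1})
    (hCK : C = {x : E | ∃ t : ℝ, 0 ≤ t ∧ ∃ k ∈ K, x = t • k})
    (hCint : (interior C).Nonempty)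
    (s : ℕ) (u : Fin s → E) (hu : ∀ β, u β ≠ 0)
    (hcover : C \ {0} ⊆ ⋃ β, {f : E | 0 < ⟪f, u β⟫})
    (r : Fin s → ℕ) (v : (β : Fin s) → Fin (r β) → E)
    (hcut : ∀ β, C ∩ {f : E | 0 < ⟪f, u β⟫} =
      (⋂ i, {f : E | 0 ≤ ⟪f, v β i⟫}) ∩ {f : E | 0 < ⟪f, u β⟫})
    (hmin : ∀ β i, ∃ x ∈ C ∩ {f : E | 0 < ⟪f, u β⟫}, ⟪x, v β i⟫ = 0) :
    C = ⋂ β, ⋂ i, {f : E | 0 ≤ ⟪f, v β i⟫} :=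
  convex_cone_polyhedral_of_locally_polyhedral_general hdim C hCadd hCsmul K hK hKS hCK hCint s u
    hcover r v hcut hmin
end

section
/- Let E be a real inner product space with dim E ≥ 2, let S = {f ∈ E : ‖f‖ = 1} be its unit sphere with the angular distance d_S(x,y) = arccos⟨x,y⟩, and let a < b be real numbers. Suppose c : [a,b] → S is a map such that every t ∈ [a,b] has ε > 0 with d_S(c(s), c(s')) = |s − s'| for all s, s' ∈ [a,b] ∩ (t−ε, t+ε). Then there exist orthonormal vectors p, q ∈ E such that c(t) = cos(t−a)·p + sin(t−a)·q for all t ∈ [a,b]; in particular, the image of c is contained in a great circle {cos t·p + sin t·q : t ∈ ℝ}. -/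
/-!
Where `c` is a local isometry, `⟪c s, c s'⟫ = cos (s - s')` for nearby `s, s'`. Subtracting from
`c s` its component along `c t` leaves vectors with Gram matrix `sin (s - t) * sin (s' - t)`,
so they are all multiples of one unit vector `w ⊥ c t`: near each `t` the curve is
`cos (s - t) • c t + sin (s - t) • w`. Two such descriptions that agree on a set with two points
at distance in `(0, π)` coincide, so "`c` follows the same great circle near `x` and near `y`" is an
equivalence relation with open classes on the connected interval `[a, b]`.
-/

open RealInnerProductSpace Real Filter Topology Set

section

variable {E : Type*} [NormedAddCommGroup E] [InnerProductSpace ℝ E]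

theorem inner_eq_cos_of_arccos_inner_eq {x y : E} {θ : ℝ} (hx : ‖x‖ = 1) (hy : ‖y‖ = 1)
    (h : arccos ⟪x, y⟫ = θ) : ⟪x, y⟫ = cos θ := by
  have hbound := abs_real_inner_le_norm x y
  rw [hx, hy, one_mul, abs_le] at hbound
  rw [← h, cos_arccos hbound.1 hbound.2]

noncomputable def greatCircle (p q : E) (t : ℝ) : E := cos t • p + sin t • q

theorem greatCircle_add (p q : E) (θ φ : ℝ) :
    greatCircle p q (θ + φ) = greatCircle (greatCircle p q φ) (greatCircle q (-p) φ) θ := by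
  simp only [greatCircle, cos_add, sin_add]
  module

theorem eq_of_greatCircle_eq_of_sin_sub_ne_zero {p q p' q' : E} {θ₁ θ₂ : ℝ}
    (hsin : sin (θ₂ - θ₁) ≠ 0) (h₁ : greatCircle p q θ₁ = greatCircle p' q' θ₁)
    (h₂ : greatCircle p q θ₂ = greatCircle p' q' θ₂) : p = p' ∧ q = q' := by
  simp only [greatCircle] at h₁ h₂
  have hp : sin (θ₂ - θ₁) • (p - p') = 0 := by
    rw [sin_sub]
    linear_combination (norm := module) sin θ₂ • h₁ - sin θ₁ • h₂
  have hq : sin (θ₂ - θ₁) • (q - q') = 0 := by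
    rw [sin_sub]
    linear_combination (norm := module) cos θ₁ • h₂ - cos θ₂ • h₁
  exact ⟨sub_eq_zero.1 ((smul_eq_zero.1 hp).resolve_left hsin),
    sub_eq_zero.1 ((smul_eq_zero.1 hq).resolve_left hsin)⟩

theorem exists_eq_greatCircle_of_inner_eq_cos {I : Set ℝ} {c : ℝ → E}
    (hc : ∀ s ∈ I, ∀ s' ∈ I, ⟪c s, c s'⟫ = cos (s - s')) {t₀ s₀ : ℝ} (ht₀ : t₀ ∈ I)
    (hs₀ : s₀ ∈ I) (hsin : sin (s₀ - t₀) ≠ 0) :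
    ∃ w : E, ‖w‖ = 1 ∧ ⟪c t₀, w⟫ = 0 ∧ ∀ s ∈ I, c s = greatCircle (c t₀) w (s - t₀) := by
  set v : ℝ → E := fun s => c s - cos (s - t₀) • c t₀
  have hv : ∀ s ∈ I, ∀ s' ∈ I, ⟪v s, v s'⟫ = sin (s - t₀) * sin (s' - t₀) := by
    intro s hs s' hs'
    simp only [v, inner_sub_left, inner_sub_right, real_inner_smul_left, real_inner_smul_right,
      hc s hs s' hs', hc s hs t₀ ht₀, hc t₀ ht₀ s' hs', hc t₀ ht₀ t₀ ht₀]
    rw [← sub_sub_sub_cancel_right s s' t₀, cos_sub, ← neg_sub s' t₀, cos_neg, sub_self, cos_zero]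
    ring
  have hv₀ : ⟪c t₀, v s₀⟫ = 0 := by
    simp only [v, inner_sub_right, real_inner_smul_right, hc t₀ ht₀ s₀ hs₀, hc t₀ ht₀ t₀ ht₀]
    rw [← neg_sub s₀ t₀, cos_neg, sub_self, cos_zero]
    ring
  set w := (sin (s₀ - t₀))⁻¹ • v s₀
  have hvw : ∀ s ∈ I, ⟪v s, w⟫ = sin (s - t₀) := by
    intro s hs
    rw [real_inner_smul_right, hv s hs s₀ hs₀]
    field_simp
  have hww : ⟪w, w⟫ = 1 := by
    rw [real_inner_smul_left, hvw s₀ hs₀]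
    field_simp
  have hw : ‖w‖ = 1 := by
    rwa [real_inner_self_eq_norm_sq, pow_eq_one_iff_of_nonneg (norm_nonneg w) two_ne_zero] at hww
  refine ⟨w, hw, by rw [real_inner_smul_right, hv₀, mul_zero], fun s hs => ?_⟩
  have hvs : v s = sin (s - t₀) • w := by
    rw [← sub_eq_zero, ← inner_self_eq_zero (𝕜 := ℝ)]
    simp only [inner_sub_left, inner_sub_right, real_inner_smul_left, real_inner_smul_right,
      real_inner_comm (v s) w, hv s hs s hs, hvw s hs, hww]
    ring
  rw [greatCircle, ← hvs]
  simp [v]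

theorem AccPt.exists_sin_sub_ne_zero {s : Set ℝ} {x : ℝ} (hx : AccPt x (𝓟 s)) {P : ℝ → Prop}
    (hP : ∀ᶠ t in 𝓝[s] x, P t) : ∃ t, P t ∧ sin (t - x) ≠ 0 := by
  have hπ : ∀ᶠ t in 𝓝 x, dist t x < π := Metric.ball_mem_nhds x pi_pos
  obtain ⟨t, ⟨htx, hts⟩, hPt, htπ⟩ :=
    ((accPt_iff_frequently.1 hx).and_eventually ((eventually_nhdsWithin_iff.1 hP).and hπ)).exists
  refine ⟨t, hPt hts, fun h0 => htx ?_⟩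
  rw [Real.dist_eq, abs_lt] at htπ
  exact sub_eq_zero.1 ((sin_eq_zero_iff_of_lt_of_lt htπ.1 htπ.2).1 h0)

theorem eq_of_eventuallyEq_greatCircle {c : ℝ → E} {s : Set ℝ} {x θ : ℝ} (hx : x ∈ s)
    (hacc : AccPt x (𝓟 s)) {p q p' q' : E} (h : c =ᶠ[𝓝[s] x] fun t => greatCircle p q (t - θ))
    (h' : c =ᶠ[𝓝[s] x] fun t => greatCircle p' q' (t - θ)) : p = p' ∧ q = q' := by
  have heq := h.symm.trans h'
  obtain ⟨t, ht, hsin⟩ := hacc.exists_sin_sub_ne_zero heq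
  exact eq_of_greatCircle_eq_of_sin_sub_ne_zero (by rwa [sub_sub_sub_cancel_right])
    (heq.self_of_nhdsWithin hx) ht

theorem exists_eventuallyEq_greatCircle_of_inner_eq_cos {c : ℝ → E} {s U : Set ℝ} {x : ℝ}
    (hacc : AccPt x (𝓟 s)) (hU : U ∈ 𝓝[s] x) (hxU : x ∈ U)
    (hc : ∀ t ∈ U, ∀ t' ∈ U, ⟪c t, c t'⟫ = cos (t - t')) :
    ∃ w : E, ‖w‖ = 1 ∧ ⟪c x, w⟫ = 0 ∧ c =ᶠ[𝓝[s] x] fun t => greatCircle (c x) w (t - x) := by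
  obtain ⟨y, hyU, hsin⟩ := hacc.exists_sin_sub_ne_zero hU
  obtain ⟨w, hw, hxw, hcw⟩ := exists_eq_greatCircle_of_inner_eq_cos hc hxU hyU hsin
  exact ⟨w, hw, hxw, mem_of_superset hU hcw⟩

theorem eqOn_greatCircle_of_forall_eventuallyEq {c : ℝ → E} {s : Set ℝ} (hs : IsPreconnected s)
    (hnt : s.Nontrivial) {θ : ℝ}
    (hloc : ∀ x ∈ s, ∃ p q : E, c =ᶠ[𝓝[s] x] fun t => greatCircle p q (t - θ))
    {x₀ : ℝ} (hx₀ : x₀ ∈ s) {p q : E} (h₀ : c =ᶠ[𝓝[s] x₀] fun t => greatCircle p q (t - θ)) :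
    EqOn c (fun t => greatCircle p q (t - θ)) s := by
  have hperf := hs.preperfect_of_nontrivial hnt
  let P : ℝ → ℝ → Prop := fun x y => ∃ p q : E,
    (c =ᶠ[𝓝[s] x] fun t => greatCircle p q (t - θ)) ∧ c =ᶠ[𝓝[s] y] fun t => greatCircle p q (t - θ)
  have hP : ∀ x ∈ s, ∀ᶠ y in 𝓝[s] x, P x y := by
    intro x hx
    obtain ⟨p, q, h⟩ := hloc x hx
    filter_upwards [eventually_eventually_nhdsWithin.2 h] with y hy using ⟨p, q, h, hy⟩
  have htrans : ∀ x y z, x ∈ s → y ∈ s → z ∈ s → P x y → P y z → P x z := by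
    rintro x y z - hy - ⟨p, q, hx, hy₁⟩ ⟨p', q', hy₂, hz⟩
    obtain ⟨rfl, rfl⟩ := eq_of_eventuallyEq_greatCircle hy (hperf y hy) hy₁ hy₂
    exact ⟨p, q, hx, hz⟩
  intro t ht
  obtain ⟨p', q', h₀', ht'⟩ :=
    hs.induction₂ P hP htrans (fun x y _ _ ⟨p, q, hx, hy⟩ => ⟨p, q, hy, hx⟩) hx₀ ht
  obtain ⟨rfl, rfl⟩ := eq_of_eventuallyEq_greatCircle hx₀ (hperf x₀ hx₀) h₀' h₀
  exact ht'.self_of_nhdsWithin ht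

end

theorem local_isometry_into_sphere_is_great_circle_arc_general
    {E : Type*} [NormedAddCommGroup E] [InnerProductSpace ℝ E]
    (a b : ℝ) (hab : a < b) (c : ℝ → E)
    (hcS : ∀ t ∈ Set.Icc a b, ‖c t‖ = 1)
    (hloc : ∀ t ∈ Set.Icc a b, ∃ ε > 0, ∀ s ∈ Set.Icc a b, ∀ s' ∈ Set.Icc a b,
      |s - t| < ε → |s' - t| < ε → Real.arccos ⟪c s, c s'⟫ = |s - s'|) :
    ∃ p q : E, ‖p‖ = 1 ∧ ‖q‖ = 1 ∧ ⟪p, q⟫ = 0 ∧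
      ∀ t ∈ Set.Icc a b, c t = Real.cos (t - a) • p + Real.sin (t - a) • q := by
  have ha : a ∈ Icc a b := left_mem_Icc.2 hab.le
  have hnt : (Icc a b).Nontrivial := ⟨a, ha, b, right_mem_Icc.2 hab.le, hab.ne⟩
  have hperf : Preperfect (Icc a b) := isPreconnected_Icc.preperfect_of_nontrivial hnt
  have hframe : ∀ x ∈ Icc a b, ∃ w : E, ‖w‖ = 1 ∧ ⟪c x, w⟫ = 0 ∧
      c =ᶠ[𝓝[Icc a b] x] fun t => greatCircle (c x) w (t - x) := by
    intro x hx
    obtain ⟨ε, hε, hiso⟩ := hloc x hx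
    refine exists_eventuallyEq_greatCircle_of_inner_eq_cos (hperf x hx)
      (inter_mem_nhdsWithin _ (Metric.ball_mem_nhds x hε)) ⟨hx, Metric.mem_ball_self hε⟩ ?_
    rintro s ⟨hs, hsx⟩ s' ⟨hs', hs'x⟩
    rw [Metric.mem_ball, Real.dist_eq] at hsx hs'x
    rw [← cos_abs]
    exact inner_eq_cos_of_arccos_inner_eq (hcS s hs) (hcS s' hs') (hiso s hs s' hs' hsx hs'x)
  obtain ⟨q, hq, hpq, hca⟩ := hframe a ha
  refine ⟨c a, q, hcS a ha, hq, hpq,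
    eqOn_greatCircle_of_forall_eventuallyEq isPreconnected_Icc hnt (fun x hx => ?_) ha hca⟩
  obtain ⟨w, -, -, hx⟩ := hframe x hx
  refine ⟨greatCircle (c x) w (a - x), greatCircle w (-c x) (a - x),
    hx.trans (.of_forall fun t => ?_)⟩
  simp only [← greatCircle_add, sub_add_sub_cancel]

/-- A locally unit-speed, locally distance-preserving curve `c : [a,b] → S` in the unit
sphere of a real inner product space of dimension at least 2 (with the angular distance
`d_S(x,y) = arccos ⟪x,y⟫`) parametrizes an arc of a great circle: there are orthonormal
vectors `p, q` with `c t = cos (t-a) • p + sin (t-a) • q` for all `t ∈ [a,b]`. -/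
theorem local_isometry_into_sphere_is_great_circle_arc
    {E : Type*} [NormedAddCommGroup E] [InnerProductSpace ℝ E]
    (hdim : 2 ≤ Module.rank ℝ E)
    (a b : ℝ) (hab : a < b) (c : ℝ → E)
    (hcS : ∀ t ∈ Set.Icc a b, ‖c t‖ = 1)
    (hloc : ∀ t ∈ Set.Icc a b, ∃ ε > 0, ∀ s ∈ Set.Icc a b, ∀ s' ∈ Set.Icc a b,
      |s - t| < ε → |s' - t| < ε → Real.arccos ⟪c s, c s'⟫ = |s - s'|) :
    ∃ p q : E, ‖p‖ = 1 ∧ ‖q‖ = 1 ∧ ⟪p, q⟫ = 0 ∧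
      ∀ t ∈ Set.Icc a b, c t = Real.cos (t - a) • p + Real.sin (t - a) • q :=
  local_isometry_into_sphere_is_great_circle_arc_general a b hab c hcS hloc
end

section
/- Let E be a real inner product space with dim E ≥ 2, let S be its unit sphere with the angular distance d_S(x,y) = arccos⟨x,y⟩, and let L > 0. Suppose c : [0,L] → S is a map such that every t ∈ [0,L] has ε > 0 with d_S(c(s), c(s')) = |s − s'| for all s, s' ∈ [0,L] ∩ (t−ε, t+ε), and suppose c(0) = c(L). Then L is a positive integer multiple of 2π, and the image of c is a great circle. -/
/-!
Where `c` is a local isometry, `⟪c s, c s'⟫ = cos (s - s')`, and this Gram identity forces `c`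
to be `s ↦ cos s • p + sin s • q` for an orthonormal pair `(p, q)` near every point. The pair is
recovered from position and velocity, `p = cos t • c t - sin t • c' t` and
`q = sin t • c t + cos t • c' t`, so it is locally constant, hence constant on the connected
interval `[0, L]`. Then `c 0 = c L` forces `cos L = 1`, i.e. `L ∈ 2π ℕ`, and an interval of
length at least `2π` covers the whole great circle.
-/

open RealInnerProductSpace Real Filter Topology Set Metric

section NormedSpace

variable {E : Type*} [NormedAddCommGroup E] [NormedSpace ℝ E]

noncomputable def greatCircleMap (p q : E) (t : ℝ) : E := cos t • p + sin t • q

theorem greatCircleMap_periodic (p q : E) : Function.Periodic (greatCircleMap p q) (2 * π) := by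
  intro t
  simp [greatCircleMap]

theorem greatCircleMap_sub (p q : E) (a t : ℝ) :
    greatCircleMap p q (t - a) =
      greatCircleMap (greatCircleMap p q (-a)) (greatCircleMap p q (π / 2 - a)) t := by
  simp only [greatCircleMap, cos_sub, sin_sub, cos_neg, sin_neg, cos_pi_div_two, sin_pi_div_two]
  module

theorem hasDerivAt_greatCircleMap (p q : E) (t : ℝ) :
    HasDerivAt (greatCircleMap p q) (-sin t • p + cos t • q) t :=
  ((hasDerivAt_cos t).smul_const p).add ((hasDerivAt_sin t).smul_const q)

noncomputable def trigFrame (c : ℝ → E) (s : Set ℝ) (t : ℝ) : E × E :=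
  (cos t • c t - sin t • derivWithin c s t, sin t • c t + cos t • derivWithin c s t)

theorem trigFrame_eq_of_eventuallyEq {c : ℝ → E} {s : Set ℝ} {t : ℝ} {p q : E}
    (hs : UniqueDiffWithinAt ℝ s t) (ht : t ∈ s) (h : c =ᶠ[𝓝[s] t] greatCircleMap p q) :
    trigFrame c s t = (p, q) := by
  have hct : c t = greatCircleMap p q t := h.eq_of_nhdsWithin ht
  have hderiv : derivWithin c s t = -sin t • p + cos t • q := by
    rw [h.derivWithin_eq hct, (hasDerivAt_greatCircleMap p q t).hasDerivWithinAt.derivWithin hs]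
  rw [trigFrame, hct, hderiv, greatCircleMap, Prod.mk.injEq]
  constructor
  · linear_combination (norm := module) (sin_sq_add_cos_sq t) • p
  · linear_combination (norm := module) (sin_sq_add_cos_sq t) • q

theorem eqOn_greatCircleMap_of_locally_eventuallyEq {c : ℝ → E} {s : Set ℝ}
    (hs : IsPreconnected s) (hs' : UniqueDiffOn ℝ s)
    (hloc : ∀ t ∈ s, ∃ p q : E, c =ᶠ[𝓝[s] t] greatCircleMap p q) {t₀ : ℝ} (ht₀ : t₀ ∈ s)
    {p q : E} (h₀ : c =ᶠ[𝓝[s] t₀] greatCircleMap p q) : EqOn c (greatCircleMap p q) s := by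
  have hframe : ∀ t ∈ s, ∀ᶠ t' in 𝓝[s] t, trigFrame c s t = trigFrame c s t' := by
    intro t ht
    obtain ⟨p', q', h'⟩ := hloc t ht
    filter_upwards [eventually_eventually_nhdsWithin.2 h', self_mem_nhdsWithin] with t' h't' ht'
    rw [trigFrame_eq_of_eventuallyEq (hs' t ht) ht h',
      trigFrame_eq_of_eventuallyEq (hs' t' ht') ht' h't']
  intro t ht
  obtain ⟨p', q', h'⟩ := hloc t ht
  have hconst := hs.induction₂ (fun x y ↦ trigFrame c s x = trigFrame c s y) hframe
    (fun _ _ _ _ _ _ ↦ Eq.trans) (fun _ _ _ _ ↦ Eq.symm) ht₀ ht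
  simp only [trigFrame_eq_of_eventuallyEq (hs' t₀ ht₀) ht₀ h₀,
    trigFrame_eq_of_eventuallyEq (hs' t ht) ht h', Prod.mk.injEq] at hconst
  rw [hconst.1, hconst.2]
  exact h'.eq_of_nhdsWithin ht

end NormedSpace

section InnerProductSpace

variable {E : Type*} [NormedAddCommGroup E] [InnerProductSpace ℝ E]

theorem inner_greatCircleMap {p q : E} (hp : ‖p‖ = 1) (hq : ‖q‖ = 1) (hpq : ⟪p, q⟫ = 0)
    (s t : ℝ) : ⟪greatCircleMap p q s, greatCircleMap p q t⟫ = cos (s - t) := by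
  have hqp : ⟪q, p⟫ = 0 := by rw [real_inner_comm, hpq]
  simp only [greatCircleMap, inner_add_left, inner_add_right, real_inner_smul_left,
    real_inner_smul_right, real_inner_self_eq_norm_sq, hp, hq, hpq, hqp, cos_sub]
  ring

theorem norm_eq_one_of_inner_self_eq_one {x : E} (h : ⟪x, x⟫ = 1) : ‖x‖ = 1 := by
  rw [norm_eq_sqrt_real_inner, h, sqrt_one]

theorem norm_greatCircleMap {p q : E} (hp : ‖p‖ = 1) (hq : ‖q‖ = 1) (hpq : ⟪p, q⟫ = 0)
    (t : ℝ) : ‖greatCircleMap p q t‖ = 1 :=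
  norm_eq_one_of_inner_self_eq_one (by rw [inner_greatCircleMap hp hq hpq, sub_self, cos_zero])

theorem eq_greatCircleMap_of_inner {p q z : E} (hp : ‖p‖ = 1) (hq : ‖q‖ = 1) (hpq : ⟪p, q⟫ = 0)
    (hz : ‖z‖ = 1) {t : ℝ} (hzp : ⟪z, p⟫ = cos t) (hzq : ⟪z, q⟫ = sin t) :
    z = greatCircleMap p q t := by
  rw [← inner_eq_one_iff_of_norm_eq_one (𝕜 := ℝ) hz (norm_greatCircleMap hp hq hpq t)]
  simp only [greatCircleMap, inner_add_right, real_inner_smul_right, hzp, hzq]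
  linear_combination cos_sq_add_sin_sq t

/-- The curve is `s ↦ cos (s - a) • c a + sin (s - a) • u`, where
`u = (c b - cos (b - a) • c a) / sin (b - a)` is the unit vector orthogonal to `c a` in the plane
of `c a` and `c b`. -/
theorem exists_eqOn_greatCircleMap_of_inner_eq_cos {c : ℝ → E} {U : Set ℝ}
    (h : ∀ s ∈ U, ∀ s' ∈ U, ⟪c s, c s'⟫ = cos (s - s')) {a b : ℝ} (ha : a ∈ U) (hb : b ∈ U)
    (hab : sin (b - a) ≠ 0) :
    ∃ p q : E, ‖p‖ = 1 ∧ ‖q‖ = 1 ∧ ⟪p, q⟫ = 0 ∧ EqOn c (greatCircleMap p q) U := by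
  have hnorm : ∀ s ∈ U, ‖c s‖ = 1 := fun s hs ↦
    norm_eq_one_of_inner_self_eq_one (by rw [h s hs s hs, sub_self, cos_zero])
  set u : E := (sin (b - a))⁻¹ • (c b - cos (b - a) • c a)
  have hcu : ∀ s ∈ U, ⟪c s, u⟫ = sin (s - a) := by
    intro s hs
    rw [real_inner_smul_right, inner_sub_right, real_inner_smul_right, h s hs b hb, h s hs a ha,
      show s - b = (s - a) - (b - a) by ring, cos_sub]
    field_simp
    ring
  have hau : ⟪c a, u⟫ = 0 := by rw [hcu a ha, sub_self, sin_zero]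
  have hu : ‖u‖ = 1 := by
    refine norm_eq_one_of_inner_self_eq_one ?_
    rw [real_inner_smul_left, inner_sub_left, real_inner_smul_left, hcu b hb, hau, mul_zero,
      sub_zero, inv_mul_cancel₀ hab]
  have hcurve : ∀ s ∈ U, c s = greatCircleMap (c a) u (s - a) := fun s hs ↦
    eq_greatCircleMap_of_inner (hnorm a ha) hu hau (hnorm s hs) (h s hs a ha) (hcu s hs)
  refine ⟨greatCircleMap (c a) u (-a), greatCircleMap (c a) u (π / 2 - a),
    norm_greatCircleMap (hnorm a ha) hu hau _, norm_greatCircleMap (hnorm a ha) hu hau _, ?_,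
    fun s hs ↦ by rw [hcurve s hs, greatCircleMap_sub]⟩
  rw [inner_greatCircleMap (hnorm a ha) hu hau, show -a - (π / 2 - a) = -(π / 2) by ring,
    cos_neg, cos_pi_div_two]

theorem exists_eventuallyEq_greatCircleMap_of_inner_eq_cos {c : ℝ → E} {s U : Set ℝ} {t : ℝ}
    (ht : t ∈ s) (hs : UniqueDiffWithinAt ℝ s t) (hU : U ∈ 𝓝[s] t)
    (h : ∀ a ∈ U, ∀ b ∈ U, ⟪c a, c b⟫ = cos (a - b)) :
    ∃ p q : E, ‖p‖ = 1 ∧ ‖q‖ = 1 ∧ ⟪p, q⟫ = 0 ∧ c =ᶠ[𝓝[s] t] greatCircleMap p q := by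
  have hacc : (𝓝[s \ {t}] t).NeBot := accPt_principal_iff_nhdsWithin.1 hs.accPt
  obtain ⟨b, ⟨hbU, hbt⟩, -, hne⟩ : (U ∩ ball t π ∩ (s \ {t})).Nonempty :=
    hacc.nonempty_of_mem <| inter_mem
      (nhdsWithin_mono t sdiff_subset (inter_mem hU (mem_nhdsWithin_of_mem_nhds
        (ball_mem_nhds t pi_pos)))) self_mem_nhdsWithin
  have hsin : sin (b - t) ≠ 0 := by
    rw [mem_ball, dist_eq, abs_lt] at hbt
    rw [Ne, sin_eq_zero_iff_of_lt_of_lt hbt.1 hbt.2, sub_eq_zero]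
    exact hne
  obtain ⟨p, q, hp, hq, hpq, hc⟩ :=
    exists_eqOn_greatCircleMap_of_inner_eq_cos h (mem_of_mem_nhdsWithin ht hU) hbU hsin
  exact ⟨p, q, hp, hq, hpq, eventuallyEq_of_mem hU hc⟩

theorem inner_eq_cos_of_arccos_inner_eq_abs {x y : E} (hx : ‖x‖ = 1) (hy : ‖y‖ = 1) {d : ℝ}
    (h : arccos ⟪x, y⟫ = |d|) : ⟪x, y⟫ = cos d := by
  rw [← cos_abs, ← h, cos_arccos (neg_one_le_real_inner_of_norm_eq_one hx hy)
    (real_inner_le_one_of_norm_eq_one hx hy)]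

theorem exists_eventuallyEq_greatCircleMap_of_arccos_inner_eq_abs {c : ℝ → E} {s : Set ℝ}
    {t ε : ℝ} (ht : t ∈ s) (hs : UniqueDiffWithinAt ℝ s t) (hc : ∀ a ∈ s, ‖c a‖ = 1)
    (hε : 0 < ε) (hiso : ∀ a ∈ s, ∀ b ∈ s, |a - t| < ε → |b - t| < ε → arccos ⟪c a, c b⟫ = |a - b|) :
    ∃ p q : E, ‖p‖ = 1 ∧ ‖q‖ = 1 ∧ ⟪p, q⟫ = 0 ∧ c =ᶠ[𝓝[s] t] greatCircleMap p q := by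
  refine exists_eventuallyEq_greatCircleMap_of_inner_eq_cos ht hs
    (inter_mem_nhdsWithin _ (ball_mem_nhds t hε)) ?_
  rintro a ⟨ha, hat⟩ b ⟨hb, hbt⟩
  rw [mem_ball, dist_eq] at hat hbt
  exact inner_eq_cos_of_arccos_inner_eq_abs (hc a ha) (hc b hb) (hiso a ha b hb hat hbt)

end InnerProductSpace

theorem exists_nat_pos_eq_two_pi_mul_of_cos_eq_one {L : ℝ} (hL : 0 < L) (h : cos L = 1) :
    ∃ n : ℕ, 0 < n ∧ L = 2 * π * n := by
  obtain ⟨n, rfl⟩ := (cos_eq_one_iff L).1 h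
  have hn : 0 < n := by exact_mod_cast pos_of_mul_pos_left hL two_pi_pos.le
  lift n to ℕ using hn.le
  exact ⟨n, by exact_mod_cast hn, by push_cast; ring⟩

theorem Function.Periodic.image_Icc_eq_range_of_le {α β : Type*} [AddCommGroup α] [LinearOrder α]
    [IsOrderedAddMonoid α] [Archimedean α] {f : α → β} {c : α} (h : Function.Periodic f c)
    (hc : 0 < c) {a b : α} (hab : a + c ≤ b) : f '' Icc a b = range f :=
  (image_subset_range _ _).antisymm <|
    h.image_Icc hc a ▸ image_mono (Icc_subset_Icc le_rfl hab)

theorem closed_local_isometry_into_sphere_general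
    {E : Type*} [NormedAddCommGroup E] [InnerProductSpace ℝ E]
    (L : ℝ) (hL : 0 < L) (c : ℝ → E)
    (hcS : ∀ t ∈ Set.Icc 0 L, ‖c t‖ = 1)
    (hloc : ∀ t ∈ Set.Icc 0 L, ∃ ε > 0, ∀ s ∈ Set.Icc 0 L, ∀ s' ∈ Set.Icc 0 L,
      |s - t| < ε → |s' - t| < ε → Real.arccos ⟪c s, c s'⟫ = |s - s'|)
    (hclosed : c 0 = c L) :
    (∃ n : ℕ, 0 < n ∧ L = 2 * π * n) ∧
    ∃ p q : E, ‖p‖ = 1 ∧ ‖q‖ = 1 ∧ ⟪p, q⟫ = 0 ∧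
      c '' Set.Icc 0 L = Set.range (fun t : ℝ => Real.cos t • p + Real.sin t • q) := by
  have hI : UniqueDiffOn ℝ (Icc 0 L) := uniqueDiffOn_Icc hL
  have hchart : ∀ t ∈ Icc 0 L, ∃ p q : E, ‖p‖ = 1 ∧ ‖q‖ = 1 ∧ ⟪p, q⟫ = 0 ∧
      c =ᶠ[𝓝[Icc 0 L] t] greatCircleMap p q := fun t ht ↦
    let ⟨_, hε, hiso⟩ := hloc t ht
    exists_eventuallyEq_greatCircleMap_of_arccos_inner_eq_abs ht (hI t ht) hcS hε hiso
  have h0 : (0 : ℝ) ∈ Icc 0 L := left_mem_Icc.2 hL.le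
  have hL' : L ∈ Icc 0 L := right_mem_Icc.2 hL.le
  obtain ⟨p, q, hp, hq, hpq, hc0⟩ := hchart 0 h0
  have hc : EqOn c (greatCircleMap p q) (Icc 0 L) :=
    eqOn_greatCircleMap_of_locally_eventuallyEq isPreconnected_Icc hI
      (fun t ht ↦ (hchart t ht).imp fun _ ⟨q, _, _, _, h⟩ ↦ ⟨q, h⟩) h0 hc0
  have hcos : cos L = 1 := by
    rw [← cos_neg, ← zero_sub, ← inner_greatCircleMap hp hq hpq, ← hc h0, ← hc hL', hclosed,
      real_inner_self_eq_norm_sq, hcS L hL', one_pow]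
  obtain ⟨n, hn, rfl⟩ := exists_nat_pos_eq_two_pi_mul_of_cos_eq_one hL hcos
  refine ⟨⟨n, hn, rfl⟩, p, q, hp, hq, hpq, ?_⟩
  rw [hc.image_eq, (greatCircleMap_periodic p q).image_Icc_eq_range_of_le two_pi_pos]
  · rfl
  · nlinarith [pi_pos, (Nat.one_le_cast (α := ℝ)).2 hn]

/-- A closed locally unit-speed, locally distance-preserving curve `c : [0,L] → S` in the
unit sphere (angular distance `d_S(x,y) = arccos ⟪x,y⟫`) of a real inner product space of
dimension at least 2, with `c 0 = c L`, has length `L` a positive integer multiple of `2π`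
and its image is a great circle. -/
theorem closed_local_isometry_into_sphere
    {E : Type*} [NormedAddCommGroup E] [InnerProductSpace ℝ E]
    (hdim : 2 ≤ Module.rank ℝ E)
    (L : ℝ) (hL : 0 < L) (c : ℝ → E)
    (hcS : ∀ t ∈ Set.Icc 0 L, ‖c t‖ = 1)
    (hloc : ∀ t ∈ Set.Icc 0 L, ∃ ε > 0, ∀ s ∈ Set.Icc 0 L, ∀ s' ∈ Set.Icc 0 L,
      |s - t| < ε → |s' - t| < ε → Real.arccos ⟪c s, c s'⟫ = |s - s'|)
    (hclosed : c 0 = c L) :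
    (∃ n : ℕ, 0 < n ∧ L = 2 * π * n) ∧
    ∃ p q : E, ‖p‖ = 1 ∧ ‖q‖ = 1 ∧ ⟪p, q⟫ = 0 ∧
      c '' Set.Icc 0 L = Set.range (fun t : ℝ => Real.cos t • p + Real.sin t • q) :=
  closed_local_isometry_into_sphere_general L hL c hcS hloc hclosed
end

section
/- Assume the standing hypotheses (★). Let u ∈ E be nonzero, let N be a path component of Ψ⁻¹(H_u), and let x₁, x₂ ∈ N. If Ψ(x₁) = Ψ(x₂) then x₁ = x₂. If Ψ(x₁) ≠ Ψ(x₂), then, setting d = d_S(Ψ(x₁), Ψ(x₂)), there exists a path γ : [0,d] → X with γ(0) = x₁, γ(d) = x₂, dist(γ(s), γ(t)) = |s − t| for all s, t ∈ [0,d], and ⟨Ψ(γ(t)), u⟩ > 0 for all t ∈ [0,d]. -/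
/-!
The great-circle arc from `Ψ x₁` to `Ψ x₂` stays in every convex cone containing both
endpoints; the open half-space `H_u` and the cone `C_N` are such cones, so the arc lies in
`S ∩ C_N ∩ H_u = Ψ(N)`. Lifting it through the injective map `Ψ|_N`, which is an isometry
onto its image for the angular distance, yields the required geodesic.
-/

open RealInnerProductSpace

/-- Standing hypotheses (★): `E` is a finite-dimensional real inner product space of
dimension at least 3 with unit sphere `S = {f | ‖f‖ = 1}` carrying the angular distance
`d_S(x,y) = arccos ⟪x,y⟫`; `X` is a compact, path-connected, locally path-connected metric
space and `Ψ : X → E` is a continuous map into `S` such that: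
(i) for every nonzero `u` and every path component `N` of `Ψ⁻¹(H_u)`
(where `H_u = {f | ⟪f,u⟫ > 0}`), `Ψ` restricted to `N` is injective and
`dist a b = d_S (Ψ a) (Ψ b)` on `N`;
(ii) for every such `N` there is a convex cone `C_N` with `Ψ(N) = S ∩ C_N ∩ H_u`, and
`Ψ(N)` has nonempty interior in `S`;
(iii) any two points of `X` are joined by a minimizing geodesic. -/
structure StarHyp (E : Type*) [NormedAddCommGroup E] [InnerProductSpace ℝ E]
    (X : Type*) [MetricSpace X] (Ψ : X → E) : Prop where
  finiteDim : FiniteDimensional ℝ E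
  dim : 3 ≤ Module.finrank ℝ E
  compact : CompactSpace X
  pathConn : PathConnectedSpace X
  locPathConn : LocPathConnectedSpace X
  unit : ∀ x, ‖Ψ x‖ = 1
  cont : Continuous Ψ
  isometric : ∀ u : E, u ≠ 0 → ∀ x₀ : X, 0 < ⟪Ψ x₀, u⟫ →
    ∀ a ∈ pathComponentIn (Ψ ⁻¹' {f : E | 0 < ⟪f, u⟫}) x₀,
      ∀ b ∈ pathComponentIn (Ψ ⁻¹' {f : E | 0 < ⟪f, u⟫}) x₀,
        (Ψ a = Ψ b → a = b) ∧ dist a b = Real.arccos ⟪Ψ a, Ψ b⟫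
  image_convex : ∀ u : E, u ≠ 0 → ∀ x₀ : X, 0 < ⟪Ψ x₀, u⟫ →
    ∃ C : Set E, (∀ a ∈ C, ∀ b ∈ C, a + b ∈ C) ∧
      (∀ t : ℝ, 0 < t → ∀ a ∈ C, t • a ∈ C) ∧
      Ψ '' pathComponentIn (Ψ ⁻¹' {f : E | 0 < ⟪f, u⟫}) x₀ =
        {f : E | ‖f‖ = 1} ∩ C ∩ {f : E | 0 < ⟪f, u⟫}
  image_interior : ∀ u : E, u ≠ 0 → ∀ x₀ : X, 0 < ⟪Ψ x₀, u⟫ →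
    ∃ f₀ ∈ Ψ '' pathComponentIn (Ψ ⁻¹' {f : E | 0 < ⟪f, u⟫}) x₀, ∃ ε > 0,
      ∀ g : E, ‖g‖ = 1 → ‖g - f₀‖ < ε →
        g ∈ Ψ '' pathComponentIn (Ψ ⁻¹' {f : E | 0 < ⟪f, u⟫}) x₀
  geodesicSpace : ∀ x y : X, ∃ γ : ℝ → X, γ 0 = x ∧ γ (dist x y) = y ∧
    ∀ s ∈ Set.Icc 0 (dist x y), ∀ t ∈ Set.Icc 0 (dist x y), dist (γ s) (γ t) = |s - t|

open Real Set

section SphereArc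

variable {E : Type*} [NormedAddCommGroup E] [InnerProductSpace ℝ E] {a b : E}

/-- The great-circle arc from `a` to `b`, parametrized by arc length. -/
noncomputable def sphereArc (a b : E) (t : ℝ) : E :=
  (sin (arccos ⟪a, b⟫))⁻¹ • (sin (arccos ⟪a, b⟫ - t) • a + sin t • b)

lemma inner_mem_Ioo_of_ne_of_inner_pos (ha : ‖a‖ = 1) (hb : ‖b‖ = 1) (hne : a ≠ b)
    {u : E} (hau : 0 < ⟪a, u⟫) (hbu : 0 < ⟪b, u⟫) :
    ⟪a, b⟫ ∈ Ioo (-1) 1 := by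
  refine ⟨lt_of_le_of_ne (neg_one_le_real_inner_of_norm_eq_one ha hb) fun h => ?_,
    lt_of_le_of_ne (real_inner_le_one_of_norm_eq_one ha hb)
      fun h => hne ((inner_eq_one_iff_of_norm_eq_one ha hb).1 h)⟩
  rw [(inner_eq_neg_one_iff_of_norm_eq_one ha hb).1 h.symm, inner_neg_left] at hau
  linarith

def openHalfSpaceCone (u : E) : ConvexCone ℝ E where
  carrier := {f | 0 < ⟪f, u⟫}
  smul_mem' c hc x (hx : 0 < ⟪x, u⟫) :=
    show 0 < ⟪c • x, u⟫ by rw [real_inner_smul_left]; positivity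
  add_mem' x (hx : 0 < ⟪x, u⟫) y (hy : 0 < ⟪y, u⟫) :=
    show 0 < ⟪x + y, u⟫ by rw [inner_add_left]; positivity

variable (hab : ⟪a, b⟫ ∈ Ioo (-1) 1)
include hab

lemma arccos_inner_pos : 0 < arccos ⟪a, b⟫ := arccos_pos.2 hab.2

lemma arccos_inner_lt_pi : arccos ⟪a, b⟫ < π := arccos_lt_pi.2 hab.1

lemma sin_arccos_inner_pos : 0 < sin (arccos ⟪a, b⟫) :=
  sin_pos_of_pos_of_lt_pi (arccos_inner_pos hab) (arccos_inner_lt_pi hab)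

lemma sphereArc_zero : sphereArc a b 0 = a := by
  simp [sphereArc, smul_smul, inv_mul_cancel₀ (sin_arccos_inner_pos hab).ne']

lemma sphereArc_arccos : sphereArc a b (arccos ⟪a, b⟫) = b := by
  simp [sphereArc, smul_smul, inv_mul_cancel₀ (sin_arccos_inner_pos hab).ne']

lemma inner_sphereArc (ha : ‖a‖ = 1) (hb : ‖b‖ = 1) (s t : ℝ) :
    ⟪sphereArc a b s, sphereArc a b t⟫ = cos (s - t) := by
  have hcos : cos (arccos ⟪a, b⟫) = ⟪a, b⟫ := cos_arccos hab.1.le hab.2.le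
  have hsin : sin (arccos ⟪a, b⟫) ≠ 0 := (sin_arccos_inner_pos hab).ne'
  simp only [sphereArc, real_inner_smul_left, real_inner_smul_right, inner_add_left,
    inner_add_right, real_inner_self_eq_norm_sq, ha, hb, real_inner_comm a b]
  generalize arccos ⟪a, b⟫ = d at hcos hsin ⊢
  rw [← hcos, sin_sub d s, sin_sub d t, cos_sub s t]
  field_simp
  linear_combination (-(sin s * sin t)) * sin_sq_add_cos_sq d

lemma norm_sphereArc (ha : ‖a‖ = 1) (hb : ‖b‖ = 1) (t : ℝ) : ‖sphereArc a b t‖ = 1 := by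
  have h := inner_sphereArc hab ha hb t t
  rwa [sub_self, cos_zero, real_inner_self_eq_norm_sq,
    pow_eq_one_iff_of_nonneg (norm_nonneg _) two_ne_zero] at h

lemma arccos_inner_sphereArc (ha : ‖a‖ = 1) (hb : ‖b‖ = 1) {s t : ℝ}
    (hs : s ∈ Icc 0 (arccos ⟪a, b⟫)) (ht : t ∈ Icc 0 (arccos ⟪a, b⟫)) :
    arccos ⟪sphereArc a b s, sphereArc a b t⟫ = |s - t| := by
  have hd := arccos_inner_lt_pi hab
  rw [inner_sphereArc hab ha hb, ← cos_abs]
  exact arccos_cos (abs_nonneg _) (abs_sub_le_iff.2 ⟨by linarith [hs.2, ht.1], by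
    linarith [hs.1, ht.2]⟩)

/-- Strictly inside `[0, d]` the arc is a positive combination of its endpoints. -/
lemma sphereArc_mem (K : ConvexCone ℝ E) (ha : a ∈ K) (hb : b ∈ K) {t : ℝ}
    (ht : t ∈ Icc 0 (arccos ⟪a, b⟫)) : sphereArc a b t ∈ K := by
  rcases ht.1.eq_or_lt with rfl | ht₀
  · rwa [sphereArc_zero hab]
  rcases ht.2.eq_or_lt with rfl | htd
  · rwa [sphereArc_arccos hab]
  have hd := arccos_inner_lt_pi hab
  exact K.smul_mem (inv_pos.2 (sin_arccos_inner_pos hab)) <| K.add_mem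
    (K.smul_mem (sin_pos_of_pos_of_lt_pi (by linarith) (by linarith)) ha)
    (K.smul_mem (sin_pos_of_pos_of_lt_pi ht₀ (by linarith)) hb)

end SphereArc

lemma dist_invFunOn_eq_arccos {E X : Type*} [NormedAddCommGroup E] [InnerProductSpace ℝ E]
    [MetricSpace X] [Nonempty X] {Ψ : X → E} {N : Set X}
    (hdist : ∀ a ∈ N, ∀ b ∈ N, dist a b = arccos ⟪Ψ a, Ψ b⟫) {f g : E}
    (hf : f ∈ Ψ '' N) (hg : g ∈ Ψ '' N) :
    dist (Function.invFunOn Ψ N f) (Function.invFunOn Ψ N g) = arccos ⟪f, g⟫ := by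
  obtain ⟨hfN, hfΨ⟩ := Function.invFunOn_pos hf
  obtain ⟨hgN, hgΨ⟩ := Function.invFunOn_pos hg
  rw [hdist _ hfN _ hgN, hfΨ, hgΨ]

namespace StarHyp

variable {E X : Type*} [NormedAddCommGroup E] [InnerProductSpace ℝ E] [MetricSpace X]
  {Ψ : X → E} {u : E} {x₀ x₁ x₂ : X}

lemma sphereArc_mem_image (h : StarHyp E X Ψ) (hu : u ≠ 0) (hx₀ : 0 < ⟪Ψ x₀, u⟫)
    (hx₁ : x₁ ∈ pathComponentIn (Ψ ⁻¹' {f : E | 0 < ⟪f, u⟫}) x₀)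
    (hx₂ : x₂ ∈ pathComponentIn (Ψ ⁻¹' {f : E | 0 < ⟪f, u⟫}) x₀)
    (hab : ⟪Ψ x₁, Ψ x₂⟫ ∈ Ioo (-1) 1) {t : ℝ} (ht : t ∈ Icc 0 (arccos ⟪Ψ x₁, Ψ x₂⟫)) :
    sphereArc (Ψ x₁) (Ψ x₂) t ∈ Ψ '' pathComponentIn (Ψ ⁻¹' {f : E | 0 < ⟪f, u⟫}) x₀ := by
  obtain ⟨C, haddC, hsmulC, himg⟩ := h.image_convex u hu x₀ hx₀
  let K : ConvexCone ℝ E :=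
    ⟨C, fun _ hc _ hx => hsmulC _ hc _ hx, fun _ hx _ hy => haddC _ hx _ hy⟩
  have hmem : ∀ x ∈ pathComponentIn (Ψ ⁻¹' {f : E | 0 < ⟪f, u⟫}) x₀,
      Ψ x ∈ K ∧ Ψ x ∈ openHalfSpaceCone u := fun x hx => by
    have hx' := mem_image_of_mem Ψ hx
    rw [himg] at hx'
    exact ⟨hx'.1.2, hx'.2⟩
  rw [himg]
  exact ⟨⟨norm_sphereArc hab (h.unit x₁) (h.unit x₂) t,
    sphereArc_mem hab K (hmem x₁ hx₁).1 (hmem x₂ hx₂).1 ht⟩,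
    sphereArc_mem hab (openHalfSpaceCone u) (hmem x₁ hx₁).2 (hmem x₂ hx₂).2 ht⟩

end StarHyp

/-- Under the standing hypotheses (★): if `x₁, x₂` lie in the same path component `N` of
`Ψ⁻¹(H_u)` then `Ψ x₁ = Ψ x₂` implies `x₁ = x₂`; and if `Ψ x₁ ≠ Ψ x₂` there is a
minimizing geodesic `γ : [0, d_S(Ψ x₁, Ψ x₂)] → X` from `x₁` to `x₂` whose image under `Ψ`
stays in the open half-space `H_u`. -/
theorem starHyp_component_injective_and_geodesic
    {E : Type*} [NormedAddCommGroup E] [InnerProductSpace ℝ E]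
    {X : Type*} [MetricSpace X] (Ψ : X → E) (h : StarHyp E X Ψ)
    (u : E) (hu : u ≠ 0) (x₁ x₂ : X) (hx₁ : 0 < ⟪Ψ x₁, u⟫)
    (hx₂ : x₂ ∈ pathComponentIn (Ψ ⁻¹' {f : E | 0 < ⟪f, u⟫}) x₁) :
    (Ψ x₁ = Ψ x₂ → x₁ = x₂) ∧
    (Ψ x₁ ≠ Ψ x₂ → ∃ γ : ℝ → X,
      γ 0 = x₁ ∧ γ (Real.arccos ⟪Ψ x₁, Ψ x₂⟫) = x₂ ∧
      (∀ s ∈ Set.Icc 0 (Real.arccos ⟪Ψ x₁, Ψ x₂⟫),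
        ∀ t ∈ Set.Icc 0 (Real.arccos ⟪Ψ x₁, Ψ x₂⟫), dist (γ s) (γ t) = |s - t|) ∧
      (∀ t ∈ Set.Icc 0 (Real.arccos ⟪Ψ x₁, Ψ x₂⟫), 0 < ⟪Ψ (γ t), u⟫)) := by
  set N := pathComponentIn (Ψ ⁻¹' {f : E | 0 < ⟪f, u⟫}) x₁
  have hx₁N : x₁ ∈ N := mem_pathComponentIn_self hx₁
  have hinj : InjOn Ψ N := fun a ha b hb => (h.isometric u hu x₁ hx₁ a ha b hb).1
  have hdist a (ha : a ∈ N) b (hb : b ∈ N) := (h.isometric u hu x₁ hx₁ a ha b hb).2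
  refine ⟨fun he => hinj hx₁N hx₂ he, fun hne => ?_⟩
  have : Nonempty X := ⟨x₁⟩
  have hab := inner_mem_Ioo_of_ne_of_inner_pos (h.unit x₁) (h.unit x₂) hne
    hx₁ (pathComponentIn_subset hx₂ :)
  have harc t (ht : t ∈ Icc 0 (arccos ⟪Ψ x₁, Ψ x₂⟫)) :=
    h.sphereArc_mem_image hu hx₁ hx₁N hx₂ hab ht
  refine ⟨Function.invFunOn Ψ N ∘ sphereArc (Ψ x₁) (Ψ x₂), ?_, ?_, fun s hs t ht => ?_,
    fun t ht => (pathComponentIn_subset (Function.invFunOn_pos (harc t ht)).1 :)⟩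
  · simpa [sphereArc_zero hab] using hinj.leftInvOn_invFunOn hx₁N
  · simpa [sphereArc_arccos hab] using hinj.leftInvOn_invFunOn hx₂
  · rw [Function.comp_apply, Function.comp_apply, dist_invFunOn_eq_arccos hdist (harc s hs)
      (harc t ht), arccos_inner_sphereArc hab (h.unit x₁) (h.unit x₂) hs ht]
end

section
/- Assume the standing hypotheses (★). Then the map Ψ : X → S is injective. -/
open RealInnerProductSpace

/-!
Near every point, `Ψ` is an isometry onto its image in the sphere, so along a minimizing
geodesic `Ψ` traces a unit-speed great circle; hence `cos (dist p q) = ⟪Ψ p, Ψ q⟫` for all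
`p q`. If `Ψ x = Ψ y` with `x ≠ y`, then `dist x y ≥ 2π`, and the geodesic `γ` from `x` to `y`
wraps around a whole great circle `C`. As `dim E ≥ 3` and the image of the path component
of `y` in `Ψ⁻¹(H_{Ψ y})` has interior, it contains a point `Ψ z` off the plane of `C`. Then
`cos (dist z (γ s)) ≠ -1` along `γ`, so `dist z (γ s)` never crosses `π`, and injectivity of
`cos` on `[0, π]` gives `dist z x = dist z y ≤ π / 2`, against the triangle inequality.
-/

open Real Set

section Sphere

variable {E : Type*} [NormedAddCommGroup E] [InnerProductSpace ℝ E]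

theorem eq_sin_div_smul_add_sin_div_smul_of_inner_eq_cos {a m r : E} {A B : ℝ}
    (ha : ⟪a, a⟫ = 1) (hm : ⟪m, m⟫ = 1) (hr : ⟪r, r⟫ = 1) (hAB : sin (A + B) ≠ 0)
    (ham : ⟪a, m⟫ = cos (A + B)) (hra : ⟪r, a⟫ = cos B) (hrm : ⟪r, m⟫ = cos A) :
    r = (sin A / sin (A + B)) • a + (sin B / sin (A + B)) • m := by
  rw [← sub_eq_zero, ← inner_self_eq_zero (𝕜 := ℝ)]
  simp only [inner_sub_left, inner_sub_right, inner_add_left, inner_add_right,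
    real_inner_smul_left, real_inner_smul_right]
  rw [real_inner_comm r a, real_inner_comm r m, real_inner_comm a m, ha, hm, hr, ham, hra, hrm]
  field_simp
  rw [sin_add, cos_add]
  linear_combination (-sin A ^ 2) * sin_sq_add_cos_sq B - sin B ^ 2 * sin_sq_add_cos_sq A

theorem inner_eq_cos_of_inner_eq_cos {p a m r : E} {A B x : ℝ}
    (ha : ⟪a, a⟫ = 1) (hm : ⟪m, m⟫ = 1) (hr : ⟪r, r⟫ = 1) (hAB : sin (A + B) ≠ 0)
    (ham : ⟪a, m⟫ = cos (A + B)) (hra : ⟪r, a⟫ = cos B) (hrm : ⟪r, m⟫ = cos A)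
    (hpa : ⟪p, a⟫ = cos (x + B)) (hpm : ⟪p, m⟫ = cos (x - A)) :
    ⟪p, r⟫ = cos x := by
  rw [eq_sin_div_smul_add_sin_div_smul_of_inner_eq_cos ha hm hr hAB ham hra hrm,
    inner_add_right, real_inner_smul_right, real_inner_smul_right, hpa, hpm]
  field_simp
  simp only [sin_add, cos_add, cos_sub]
  ring

def IsGreatCircleArc (c : ℝ → E) (I : Set ℝ) : Prop :=
  ∀ s ∈ I, ∀ t ∈ I, ⟪c s, c t⟫ = cos (s - t)

theorem IsGreatCircleArc.extend {c : ℝ → E} {L a η : ℝ} (hη : 0 < η) (hηπ : η < π)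
    (hloc : ∀ s ∈ Icc 0 L, ∀ t ∈ Icc 0 L, |s - t| ≤ 2 * η → ⟪c s, c t⟫ = cos (s - t))
    (hc : IsGreatCircleArc c (Icc 0 L ∩ Iic a)) :
    IsGreatCircleArc c (Icc 0 L ∩ Iic (a + η)) := by
  have hunit : ∀ x ∈ Icc 0 L, ⟪c x, c x⟫ = 1 := fun x hx => by
    simpa using hloc x hx x hx (by simp [hη.le])
  have hle : ∀ s ∈ Icc 0 L ∩ Iic (a + η), ∀ t ∈ Icc 0 L ∩ Iic (a + η), s ≤ t →
      ⟪c s, c t⟫ = cos (s - t) := by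
    rintro s ⟨hs, hsa : s ≤ a + η⟩ t ⟨ht, hta : t ≤ a + η⟩ hst
    by_cases hta' : t ≤ a
    · exact hc s ⟨hs, hst.trans hta'⟩ t ⟨ht, hta'⟩
    by_cases hsa' : a - η ≤ s
    · exact hloc s hs t ht (abs_le.mpr ⟨by linarith, by linarith⟩)
    rw [not_le] at hta' hsa'
    have hα : a - η ∈ Icc 0 L ∩ Iic a :=
      ⟨⟨by linarith [hs.1], by linarith [ht.2]⟩, mem_Iic.2 (by linarith)⟩
    have hμ : a ∈ Icc 0 L ∩ Iic a :=
      ⟨⟨by linarith [hs.1], by linarith [ht.2]⟩, mem_Iic.2 le_rfl⟩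
    -- `c t` is pinned down by the two anchors `c (a - η)` and `c a`, which lie on the arc
    refine inner_eq_cos_of_inner_eq_cos (A := a - t) (B := t - (a - η)) (hunit _ hα.1)
      (hunit _ hμ.1) (hunit t ht) ?_ ?_ ?_ ?_ ?_ ?_
    · rw [show a - t + (t - (a - η)) = η by ring]
      exact (sin_pos_of_pos_of_lt_pi hη hηπ).ne'
    · rw [show a - t + (t - (a - η)) = -(a - η - a) by ring, cos_neg]
      exact hc _ hα _ hμ
    · exact hloc t ht _ hα.1 (abs_le.mpr ⟨by linarith, by linarith⟩)
    · rw [← cos_neg, neg_sub]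
      exact hloc t ht a hμ.1 (abs_le.mpr ⟨by linarith, by linarith⟩)
    · convert hc s ⟨hs, mem_Iic.2 (by linarith)⟩ _ hα using 2; ring
    · convert hc s ⟨hs, mem_Iic.2 (by linarith)⟩ _ hμ using 2; ring
  intro s hs t ht
  rcases le_total s t with hst | hts
  · exact hle s hs t ht hst
  · rw [real_inner_comm, ← cos_neg, neg_sub]
    exact hle t ht s hs hts

theorem isGreatCircleArc_Icc_of_local {c : ℝ → E} {L δ : ℝ} (hδ : 0 < δ)
    (hloc : ∀ s ∈ Icc 0 L, ∀ t ∈ Icc 0 L, |s - t| < δ → ⟪c s, c t⟫ = cos (s - t)) :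
    IsGreatCircleArc c (Icc 0 L) := by
  set η := min δ 1 / 3 with hη_def
  have hη : 0 < η := by positivity
  have hηδ : 2 * η < δ := by linarith [min_le_left δ 1, min_le_right δ 1]
  have hηπ : η < π := by linarith [min_le_left δ 1, min_le_right δ 1, pi_gt_three]
  have hstep : ∀ n : ℕ, IsGreatCircleArc c (Icc 0 L ∩ Iic (n * η)) := by
    intro n
    induction n with
    | zero =>
      rintro s ⟨hs, hs0⟩ t ⟨ht, ht0⟩
      simp only [Nat.cast_zero, zero_mul, mem_Iic] at hs0 ht0
      exact hloc s hs t ht (by rw [le_antisymm hs0 hs.1, le_antisymm ht0 ht.1]; simpa)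
    | succ n ih =>
      rw [Nat.cast_succ, add_one_mul]
      exact ih.extend hη hηπ fun s hs t ht hst => hloc s hs t ht (by linarith)
  obtain ⟨n, hn⟩ := exists_nat_ge (L / η)
  have hLn : L ≤ n * η := (div_le_iff₀ hη).mp hn
  intro s hs t ht
  exact hstep n s ⟨hs, hs.2.trans hLn⟩ t ⟨ht, ht.2.trans hLn⟩

theorem IsGreatCircleArc.inner_eq_zero {c : ℝ → E} {I : Set ℝ} (hc : IsGreatCircleArc c I)
    {a b : ℝ} (ha : a ∈ I) (hb : b ∈ I) (hab : sin (b - a) ≠ 0) {e : E}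
    (hae : ⟪c a, e⟫ = 0) (hbe : ⟪c b, e⟫ = 0) {s : ℝ} (hs : s ∈ I) : ⟪c s, e⟫ = 0 := by
  have hunit : ∀ x ∈ I, ⟪c x, c x⟫ = 1 := fun x hx => by simpa using hc x hx x hx
  have hspan := eq_sin_div_smul_add_sin_div_smul_of_inner_eq_cos (A := b - s) (B := s - a)
    (hunit a ha) (hunit b hb) (hunit s hs) (by rwa [sub_add_sub_cancel])
    (by rw [sub_add_sub_cancel, ← cos_neg, neg_sub]; exact hc a ha b hb) (hc s hs a ha)
    (by rw [← cos_neg, neg_sub]; exact hc s hs b hb)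
  rw [hspan, inner_add_left, real_inner_smul_left, real_inner_smul_left, hae, hbe]
  ring

theorem exists_norm_eq_one_inner_eq_zero_inner_eq_zero [FiniteDimensional ℝ E]
    (hE : 3 ≤ Module.finrank ℝ E) (u q : E) : ∃ e : E, ‖e‖ = 1 ∧ ⟪u, e⟫ = 0 ∧ ⟪q, e⟫ = 0 := by
  let f : E →ₗ[ℝ] ℝ × ℝ := (innerₛₗ ℝ u).prod (innerₛₗ ℝ q)
  have hker : LinearMap.ker f ≠ ⊥ := LinearMap.ker_ne_bot_of_finrank_lt (by simp; omega)
  obtain ⟨e, he, hne⟩ := (Submodule.ne_bot_iff _).mp hker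
  have hfe : ⟪u, e⟫ = 0 ∧ ⟪q, e⟫ = 0 := by simpa [f] using he
  refine ⟨‖e‖⁻¹ • e, norm_smul_inv_norm hne, ?_, ?_⟩ <;>
    simp [real_inner_smul_right, hfe.1, hfe.2]

theorem exists_norm_eq_one_norm_sub_lt_inner_ne_zero {f e : E} (hf : ‖f‖ = 1) (he : ‖e‖ = 1)
    {ε : ℝ} (hε : 0 < ε) : ∃ v : E, ‖v‖ = 1 ∧ ‖v - f‖ < ε ∧ ⟪v, e⟫ ≠ 0 := by
  by_cases hfe : ⟪f, e⟫ = 0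
  swap
  · exact ⟨f, hf, by simpa using hε, hfe⟩
  have hnorm : ∀ a b : ℝ, ‖a • f + b • e‖ ^ 2 = a ^ 2 + b ^ 2 := fun a b => by
    rw [← real_inner_self_eq_norm_sq]
    simp only [inner_add_left, inner_add_right, real_inner_smul_left, real_inner_smul_right,
      real_inner_comm f e, hfe]
    rw [real_inner_self_eq_norm_sq, real_inner_self_eq_norm_sq, hf, he]
    ring
  set θ := min ε 1 with hθ_def
  have hθ : 0 < θ := lt_min hε one_pos
  have hθε : θ ≤ ε := min_le_left ε 1
  have hθπ : θ < π := (min_le_right ε 1).trans_lt (by linarith [pi_gt_three])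
  refine ⟨cos θ • f + sin θ • e, ?_, ?_, ?_⟩
  · rw [← pow_eq_one_iff_of_nonneg (norm_nonneg _) two_ne_zero, hnorm, cos_sq_add_sin_sq]
  · have hsub : cos θ • f + sin θ • e - f = (cos θ - 1) • f + sin θ • e := by
      rw [sub_smul, one_smul]; abel
    -- `‖v - f‖² = 2 - 2 cos θ < θ²`
    have hsq : ‖cos θ • f + sin θ • e - f‖ ^ 2 < ε ^ 2 := by
      rw [hsub, hnorm]
      nlinarith [sin_sq_add_cos_sq θ, one_sub_sq_div_two_lt_cos hθ.ne']
    exact lt_of_pow_lt_pow_left₀ 2 hε.le hsq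
  · rw [inner_add_left, real_inner_smul_left, real_inner_smul_left, hfe,
      real_inner_self_eq_norm_sq, he]
    simpa using (sin_pos_of_pos_of_lt_pi hθ hθπ).ne'

end Sphere

theorem eq_of_cos_eq_of_cos_ne_neg_one {f : ℝ → ℝ} {L : ℝ} (hL : 0 ≤ L)
    (hf : ContinuousOn f (Icc 0 L)) (hne : ∀ s ∈ Icc 0 L, cos (f s) ≠ -1)
    (h0 : 0 ≤ f 0) (hL0 : 0 ≤ f L) (hLπ : f L ≤ π) (hcos : cos (f 0) = cos (f L)) :
    f 0 = f L := by
  have h0π : f 0 ≤ π := by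
    by_contra hlt
    obtain ⟨s, hs, hfs⟩ := intermediate_value_Icc' hL hf ⟨hLπ, (not_le.mp hlt).le⟩
    exact hne s hs (by rw [hfs, cos_pi])
  exact injOn_cos ⟨h0, h0π⟩ ⟨hL0, hLπ⟩ hcos

theorem continuousOn_of_dist_eq_abs_sub {X : Type*} [PseudoMetricSpace X] {γ : ℝ → X}
    {I : Set ℝ} (hγ : ∀ s ∈ I, ∀ t ∈ I, dist (γ s) (γ t) = |s - t|) : ContinuousOn γ I :=
  (LipschitzOnWith.of_dist_le_mul (K := 1) fun s hs t ht => by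
    rw [hγ s hs t ht, NNReal.coe_one, one_mul, Real.dist_eq]).continuousOn

namespace StarHyp

variable {E : Type*} [NormedAddCommGroup E] [InnerProductSpace ℝ E]
  {X : Type*} [MetricSpace X] {Ψ : X → E}

theorem inner_self_apply (h : StarHyp E X Ψ) (x : X) : ⟪Ψ x, Ψ x⟫ = 1 := by
  simp [h.unit x]

theorem apply_ne_zero (h : StarHyp E X Ψ) (x : X) : Ψ x ≠ 0 :=
  norm_ne_zero_iff.mp (by rw [h.unit]; exact one_ne_zero)

theorem exists_inner_pos_of_dist_lt (h : StarHyp E X Ψ) :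
    ∃ δ > 0, ∀ a b : X, dist a b < δ → 0 < ⟪Ψ a, Ψ b⟫ := by
  have := h.compact
  obtain ⟨δ, hδ, hΨ⟩ := Metric.uniformContinuous_iff.mp
    (CompactSpace.uniformContinuous_of_continuous h.cont) 1 one_pos
  refine ⟨δ, hδ, fun a b hab => ?_⟩
  have hlt : ‖Ψ a - Ψ b‖ < 1 := by simpa [dist_eq_norm] using hΨ hab
  nlinarith [norm_sub_sq_real (Ψ a) (Ψ b), h.unit a, h.unit b, norm_nonneg (Ψ a - Ψ b)]

theorem exists_cos_dist_eq_inner_of_dist_lt (h : StarHyp E X Ψ) :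
    ∃ δ > 0, ∀ a b : X, dist a b < δ → cos (dist a b) = ⟪Ψ a, Ψ b⟫ := by
  obtain ⟨δ, hδ, hpos⟩ := h.exists_inner_pos_of_dist_lt
  refine ⟨δ, hδ, fun a b hab => ?_⟩
  obtain ⟨γ, hγ0, hγd, hγ⟩ := h.geodesicSpace a b
  have hd : 0 ≤ dist a b := dist_nonneg
  have haa : 0 < ⟪Ψ a, Ψ a⟫ := by rw [h.inner_self_apply]; exact one_pos
  -- a short geodesic stays in the half-space `H_{Ψ a}`, so `b` is in the path component of `a`
  have hb : b ∈ pathComponentIn (Ψ ⁻¹' {f : E | 0 < ⟪f, Ψ a⟫}) a := by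
    refine ((convex_Icc 0 (dist a b)).isPathConnected (nonempty_Icc.2 hd)
      |>.image' (continuousOn_of_dist_eq_abs_sub hγ)).subset_pathComponentIn
      ⟨0, left_mem_Icc.2 hd, hγ0⟩ ?_ ⟨_, right_mem_Icc.2 hd, hγd⟩
    rintro _ ⟨r, hr, rfl⟩
    show 0 < ⟪Ψ (γ r), Ψ a⟫
    rw [real_inner_comm]
    refine hpos a (γ r) ?_
    rw [← hγ0, hγ 0 (left_mem_Icc.2 hd) r hr, zero_sub, abs_neg, abs_of_nonneg hr.1]
    exact hr.2.trans_lt hab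
  have hab' := abs_le.mp ((abs_real_inner_le_norm (Ψ a) (Ψ b)).trans_eq
    (by rw [h.unit, h.unit, one_mul]))
  rw [(h.isometric (Ψ a) (h.apply_ne_zero a) a haa a (mem_pathComponentIn_self haa) b hb).2,
    cos_arccos hab'.1 hab'.2]

theorem isGreatCircleArc_comp (h : StarHyp E X Ψ) {γ : ℝ → X} {L : ℝ}
    (hγ : ∀ s ∈ Icc 0 L, ∀ t ∈ Icc 0 L, dist (γ s) (γ t) = |s - t|) :
    IsGreatCircleArc (Ψ ∘ γ) (Icc 0 L) := by
  obtain ⟨δ, hδ, hloc⟩ := h.exists_cos_dist_eq_inner_of_dist_lt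
  refine isGreatCircleArc_Icc_of_local hδ fun s hs t ht hst => ?_
  rw [← hγ s hs t ht] at hst
  rw [Function.comp_apply, Function.comp_apply, ← hloc _ _ hst, hγ s hs t ht, cos_abs]

theorem cos_dist (h : StarHyp E X Ψ) (p q : X) : cos (dist p q) = ⟪Ψ p, Ψ q⟫ := by
  obtain ⟨γ, hγ0, hγL, hγ⟩ := h.geodesicSpace p q
  have hd : 0 ≤ dist p q := dist_nonneg
  have := h.isGreatCircleArc_comp hγ 0 (left_mem_Icc.2 hd) _ (right_mem_Icc.2 hd)
  rwa [Function.comp_apply, Function.comp_apply, hγ0, hγL, zero_sub, cos_neg, eq_comm] at this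

theorem two_pi_le_dist_of_apply_eq (h : StarHyp E X Ψ) {x y : X} (hne : x ≠ y)
    (hxy : Ψ x = Ψ y) : 2 * π ≤ dist x y := by
  by_contra hlt
  have hcos : cos (dist x y) = 1 := by rw [h.cos_dist, ← hxy, h.inner_self_apply]
  exact hne (dist_eq_zero.mp <| (cos_eq_one_iff_of_lt_of_lt
    (by linarith [pi_pos, dist_nonneg (x := x) (y := y)]) (not_le.mp hlt)).mp hcos)

theorem exists_mem_pathComponentIn_inner_ne_zero (h : StarHyp E X Ψ) {u : E} (hu : u ≠ 0)
    {y : X} (hy : 0 < ⟪Ψ y, u⟫) {e : E} (he : ‖e‖ = 1) :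
    ∃ z ∈ pathComponentIn (Ψ ⁻¹' {f : E | 0 < ⟪f, u⟫}) y, ⟪Ψ z, e⟫ ≠ 0 := by
  obtain ⟨_, ⟨z₀, -, rfl⟩, ε, hε, hball⟩ := h.image_interior u hu y hy
  obtain ⟨v, hv, hvz₀, hve⟩ := exists_norm_eq_one_norm_sub_lt_inner_ne_zero (h.unit z₀) he hε
  obtain ⟨z, hzN, rfl⟩ := hball v hv hvz₀
  exact ⟨z, hzN, hve⟩

theorem dist_eq_dist_of_apply_eq (h : StarHyp E X Ψ) {γ : ℝ → X} {L : ℝ} (hL : 0 ≤ L)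
    (hγ : ∀ s ∈ Icc 0 L, ∀ t ∈ Icc 0 L, dist (γ s) (γ t) = |s - t|) {z : X}
    (hz : ∀ s ∈ Icc 0 L, Ψ z ≠ -Ψ (γ s)) (hzL : dist z (γ L) ≤ π)
    (hγL : Ψ (γ 0) = Ψ (γ L)) : dist z (γ 0) = dist z (γ L) := by
  refine eq_of_cos_eq_of_cos_ne_neg_one (f := fun s => dist z (γ s)) hL
    ((continuous_const.dist continuous_id).comp_continuousOn
      (continuousOn_of_dist_eq_abs_sub hγ)) (fun s hs => ?_) dist_nonneg dist_nonneg hzL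
    (by rw [h.cos_dist, h.cos_dist, hγL])
  rw [h.cos_dist, Ne, inner_eq_neg_one_iff_of_norm_eq_one (h.unit _) (h.unit _)]
  exact hz s hs

end StarHyp

/-- Under the standing hypotheses (★), the map `Ψ : X → S` is injective
(the fibers of the moment map are connected). -/
theorem starHyp_injective
    {E : Type*} [NormedAddCommGroup E] [InnerProductSpace ℝ E]
    {X : Type*} [MetricSpace X] (Ψ : X → E) (h : StarHyp E X Ψ) :
    Function.Injective Ψ := by
  intro x y hxy
  by_contra hne
  have := h.finiteDim
  obtain ⟨γ, hγ0, hγL, hγ⟩ := h.geodesicSpace x y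
  have hL := h.two_pi_le_dist_of_apply_eq hne hxy
  have hπ2 : π / 2 ∈ Icc 0 (dist x y) := ⟨by positivity, by linarith [pi_pos]⟩
  have h0 : (0 : ℝ) ∈ Icc 0 (dist x y) := left_mem_Icc.2 dist_nonneg
  obtain ⟨e, he, hxe, hqe⟩ :=
    exists_norm_eq_one_inner_eq_zero_inner_eq_zero h.dim (Ψ x) (Ψ (γ (π / 2)))
  have hcircle : ∀ s ∈ Icc 0 (dist x y), ⟪Ψ (γ s), e⟫ = 0 := fun s hs =>
    (h.isGreatCircleArc_comp hγ).inner_eq_zero h0 hπ2 (by simp)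
      (by simpa [hγ0] using hxe) (by simpa using hqe) hs
  have hyx : 0 < ⟪Ψ y, Ψ x⟫ := by rw [← hxy, h.inner_self_apply]; exact one_pos
  obtain ⟨z, hzN, hze⟩ := h.exists_mem_pathComponentIn_inner_ne_zero (h.apply_ne_zero x) hyx he
  have hzy : dist z y ≤ π / 2 := by
    rw [(h.isometric _ (h.apply_ne_zero x) y hyx z hzN y (mem_pathComponentIn_self hyx)).2,
      ← hxy]
    exact arccos_le_pi_div_two.mpr (pathComponentIn_subset hzN).le
  have hzx := h.dist_eq_dist_of_apply_eq dist_nonneg hγ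
    (fun s hs hzs => hze (by rw [hzs, inner_neg_left, hcircle s hs, neg_zero]))
    (by rw [hγL]; linarith [pi_pos]) (by rw [hγ0, hγL, hxy])
  rw [hγ0, hγL] at hzx
  linarith [dist_triangle x z y, dist_comm x z, pi_pos]
end
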